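/- arXiv:2101.11517 — 5 statements merged into one kernel-verified Lean document; each statement's English description precedes it below -/
import Mathlib

section
/- Suppose X ⊆ ℝ^m is nonempty and compact, F, f : ℝ^m × ℝ^n → ℝ are continuous, and there is a compact set K ⊆ ℝ^n such that for every x ∈ X the set S̃(x) is nonempty and S(x) ⊆ K. Assume the family of maps y_T : X → ℝ^n satisfies properties (P1) and (P2). If for each T the point x_T is a global minimizer of φ_T over X, then every limit point x̄ of the sequence {x_T} is a global minimizer of φ over X, i.e., φ(x̄) = inf_{x ∈ X} φ(x). -/
open Filter Topology

/-- Lower-level value function `ψ(x) := inf_{y ∈ ℝⁿ} f(x, y)`. -/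
noncomputable def psiVal {m n : ℕ}
    (f : EuclideanSpace ℝ (Fin m) × EuclideanSpace ℝ (Fin n) → ℝ)
    (x : EuclideanSpace ℝ (Fin m)) : ℝ :=
  ⨅ y : EuclideanSpace ℝ (Fin n), f (x, y)

/-- Lower-level solution set `S(x) := {y : f(x, y) ≤ ψ(x)}`. -/
noncomputable def LLsol {m n : ℕ}
    (f : EuclideanSpace ℝ (Fin m) × EuclideanSpace ℝ (Fin n) → ℝ)
    (x : EuclideanSpace ℝ (Fin m)) : Set (EuclideanSpace ℝ (Fin n)) :=
  {y | f (x, y) ≤ psiVal f x}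

/-- Optimistic upper-level value function `φ(x) := inf_{y ∈ S(x)} F(x, y)`. -/
noncomputable def phiVal {m n : ℕ}
    (F f : EuclideanSpace ℝ (Fin m) × EuclideanSpace ℝ (Fin n) → ℝ)
    (x : EuclideanSpace ℝ (Fin m)) : ℝ :=
  ⨅ y : LLsol f x, F (x, (y : EuclideanSpace ℝ (Fin n)))

/-- Inner simple bilevel solution set `S̃(x) := {y ∈ S(x) : F(x, y) = φ(x)}`. -/
noncomputable def ISBsol {m n : ℕ}
    (F f : EuclideanSpace ℝ (Fin m) × EuclideanSpace ℝ (Fin n) → ℝ)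
    (x : EuclideanSpace ℝ (Fin m)) : Set (EuclideanSpace ℝ (Fin n)) :=
  {y | y ∈ LLsol f x ∧ F (x, y) = phiVal F f x}


/-- Auxiliary: if the lower-level sublevel set is contained in a compact set, the
lower-level objective is bounded below. -/
lemma bddBelow_range_aux {n : ℕ} (g : EuclideanSpace ℝ (Fin n) → ℝ) (hg : Continuous g)
    (K : Set (EuclideanSpace ℝ (Fin n))) (hK : IsCompact K)
    (hsub : {y | g y ≤ ⨅ y, g y} ⊆ K) :
    BddBelow (Set.range g) := by
  by_contra h
  have h0 : (⨅ y, g y) = 0 := Real.iInf_of_not_bddBelow h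
  rcases K.eq_empty_or_nonempty with hKe | hKne
  · apply h
    refine ⟨0, ?_⟩
    rintro _ ⟨y, rfl⟩
    by_contra hy
    push_neg at hy
    have : y ∈ K := hsub (by simp [h0]; linarith)
    simp [hKe] at this
  · obtain ⟨z, hzK, hz⟩ := hK.exists_isMinOn hKne hg.continuousOn
    apply h
    refine ⟨min (g z) 0, ?_⟩
    rintro _ ⟨y, rfl⟩
    by_cases hy : g y ≤ 0
    · have : y ∈ K := hsub (by simp [h0, hy])
      exact le_trans (min_le_left _ _) (hz this)
    · exact le_trans (min_le_right _ _) (le_of_not_ge hy)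

/-- Auxiliary: `F(x, u T) → φ(x)` when `infDist(u T, S̃(x)) → 0` and `u` stays bounded. -/
lemma tendsto_phiT_aux {m n : ℕ}
    (F f : EuclideanSpace ℝ (Fin m) × EuclideanSpace ℝ (Fin n) → ℝ)
    (hF : Continuous F) (hf : Continuous f)
    (K : Set (EuclideanSpace ℝ (Fin n))) (hK : IsCompact K)
    (x : EuclideanSpace ℝ (Fin m))
    (hne : (ISBsol F f x).Nonempty) (hsub : LLsol f x ⊆ K)
    (u : ℕ → EuclideanSpace ℝ (Fin n)) (C : ℝ) (hu : ∀ T, ‖u T‖ ≤ C)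
    (hdist : Tendsto (fun T => Metric.infDist (u T) (ISBsol F f x)) atTop (𝓝 0)) :
    Tendsto (fun T => F (x, u T)) atTop (𝓝 (phiVal F f x)) := by
  have hLLclosed : IsClosed (LLsol f x) := by
    have : LLsol f x = (fun y => f (x, y)) ⁻¹' Set.Iic (psiVal f x) := rfl
    rw [this]
    exact IsClosed.preimage (hf.comp (Continuous.prodMk_right x)) isClosed_Iic
  have hSclosed : IsClosed (ISBsol F f x) := by
    have : ISBsol F f x = LLsol f x ∩ (fun y => F (x, y)) ⁻¹' {phiVal F f x} := rfl
    rw [this]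
    exact hLLclosed.inter (IsClosed.preimage (hF.comp (Continuous.prodMk_right x))
      isClosed_singleton)
  have hScp : IsCompact (ISBsol F f x) :=
    hK.of_isClosed_subset hSclosed (fun y hy => hsub hy.1)
  set g : EuclideanSpace ℝ (Fin n) → ℝ := fun y => F (x, y) with hg
  have hgc : Continuous g := hF.comp (Continuous.prodMk_right x)
  set L : Set (EuclideanSpace ℝ (Fin n)) := K ∪ Metric.closedBall 0 C with hL
  have hLcp : IsCompact L := hK.union (isCompact_closedBall 0 C)
  have hUC : UniformContinuousOn g L := hLcp.uniformContinuousOn_of_continuous hgc.continuousOn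
  rw [Metric.uniformContinuousOn_iff] at hUC
  rw [Metric.tendsto_atTop]
  intro ε hε
  obtain ⟨δ, hδ, hδ'⟩ := hUC ε hε
  rw [Metric.tendsto_atTop] at hdist
  obtain ⟨N, hN⟩ := hdist δ hδ
  refine ⟨N, fun T hT => ?_⟩
  obtain ⟨z, hzS, hzd⟩ := hScp.exists_infDist_eq_dist hne (u T)
  have hd : dist (u T) z < δ := by
    have h1 := hN T hT
    rw [Real.dist_eq] at h1
    have h0 : (0:ℝ) ≤ Metric.infDist (u T) (ISBsol F f x) := Metric.infDist_nonneg
    rw [← hzd]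
    calc Metric.infDist (u T) (ISBsol F f x)
        = |Metric.infDist (u T) (ISBsol F f x) - 0| := by rw [sub_zero, abs_of_nonneg h0]
      _ < δ := h1
  have huL : u T ∈ L := Or.inr (by simpa [Metric.mem_closedBall, dist_eq_norm] using hu T)
  have hzL : z ∈ L := Or.inl (hsub hzS.1)
  have hlt := hδ' (u T) huL z hzL hd
  calc dist (F (x, u T)) (phiVal F f x) = dist (g (u T)) (g z) := by rw [← hzS.2]
    _ < ε := hlt

/-- Convergence towards a global minimum: any limit point of the sequence of global
minimizers of `φ_T` over `X` is a global minimizer of `φ` over `X`. -/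
theorem statement0 {m n : ℕ}
    (X : Set (EuclideanSpace ℝ (Fin m))) (hXne : X.Nonempty) (hXcp : IsCompact X)
    (F f : EuclideanSpace ℝ (Fin m) × EuclideanSpace ℝ (Fin n) → ℝ)
    (hF : Continuous F) (hf : Continuous f)
    (K : Set (EuclideanSpace ℝ (Fin n))) (hKcp : IsCompact K)
    (hSol : ∀ x ∈ X, (ISBsol F f x).Nonempty ∧ LLsol f x ⊆ K)
    (yT : ℕ → EuclideanSpace ℝ (Fin m) → EuclideanSpace ℝ (Fin n))
    -- (P1): uniform boundedness of the family {y_T} on X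
    (hP1bdd : ∃ C : ℝ, ∀ T : ℕ, ∀ x ∈ X, ‖yT T x‖ ≤ C)
    -- (P1): sup_{x ∈ X} (f(x, y_T(x)) − ψ(x)) → 0 as T → ∞
    (hP1 : ∀ ε > (0 : ℝ), ∃ N : ℕ, ∀ T ≥ N, ∀ x ∈ X, f (x, yT T x) - psiVal f x ≤ ε)
    -- (P2): pointwise dist(y_T(x), S̃(x)) → 0
    (hP2 : ∀ x ∈ X,
      Tendsto (fun T => Metric.infDist (yT T x) (ISBsol F f x)) atTop (𝓝 0))
    (xT : ℕ → EuclideanSpace ℝ (Fin m))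
    -- each x_T is a global minimizer of φ_T(x) := F(x, y_T(x)) over X
    (hxT : ∀ T : ℕ, xT T ∈ X ∧ ∀ x ∈ X, F (xT T, yT T (xT T)) ≤ F (x, yT T x))
    (xbar : EuclideanSpace ℝ (Fin m))
    (hxbar : MapClusterPt xbar atTop xT) :
    xbar ∈ X ∧ ∀ x ∈ X, phiVal F f xbar ≤ phiVal F f x := by
  obtain ⟨C, hC⟩ := hP1bdd
  -- extract a subsequence of xT converging to xbar
  obtain ⟨φ₁, hφ₁mono, hφ₁⟩ := TopologicalSpace.FirstCountableTopology.tendsto_subseq hxbar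
  -- extract a further subsequence such that yT (σ k) (xT (σ k)) converges
  have hyball : ∀ k, yT (φ₁ k) (xT (φ₁ k)) ∈ Metric.closedBall (0 : EuclideanSpace ℝ (Fin n)) C := by
    intro k
    simpa [Metric.mem_closedBall, dist_eq_norm] using hC (φ₁ k) (xT (φ₁ k)) (hxT (φ₁ k)).1
  obtain ⟨ybar, hybar_mem, φ₂, hφ₂mono, hφ₂⟩ :=
    (isCompact_closedBall (0 : EuclideanSpace ℝ (Fin n)) C).tendsto_subseq hyball
  set σ : ℕ → ℕ := φ₁ ∘ φ₂ with hσ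
  have hσmono : StrictMono σ := hφ₁mono.comp hφ₂mono
  have hx_tendsto : Tendsto (fun k => xT (σ k)) atTop (𝓝 xbar) :=
    hφ₁.comp hφ₂mono.tendsto_atTop
  have hy_tendsto : Tendsto (fun k => yT (σ k) (xT (σ k))) atTop (𝓝 ybar) := hφ₂
  have hxbarX : xbar ∈ X :=
    hXcp.isClosed.mem_of_tendsto hx_tendsto (Eventually.of_forall fun k => (hxT (σ k)).1)
  refine ⟨hxbarX, fun x hx => ?_⟩
  -- convergence of the pairs
  have hpair : Tendsto (fun k => ((xT (σ k) : EuclideanSpace ℝ (Fin m)), yT (σ k) (xT (σ k))))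
      atTop (𝓝 (xbar, ybar)) := hx_tendsto.prodMk_nhds hy_tendsto
  -- ybar ∈ LLsol f xbar
  have hyLL : ybar ∈ LLsol f xbar := by
    have key : ∀ y : EuclideanSpace ℝ (Fin n), f (xbar, ybar) ≤ f (xbar, y) := by
      intro y
      refine le_of_forall_pos_le_add ?_
      intro ε hε
      obtain ⟨N, hN⟩ := hP1 ε hε
      have hev : ∀ᶠ k in atTop, f (xT (σ k), yT (σ k) (xT (σ k))) ≤ f (xT (σ k), y) + ε := by
        filter_upwards [eventually_ge_atTop N] with k hk
        have hσk : σ k ≥ N := le_trans hk (hσmono.le_apply)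
        have h1 := hN (σ k) hσk (xT (σ k)) (hxT (σ k)).1
        have hbdd : BddBelow (Set.range fun y' => f (xT (σ k), y')) := by
          apply bddBelow_range_aux _ (hf.comp (Continuous.prodMk_right _)) K hKcp
          exact (hSol (xT (σ k)) (hxT (σ k)).1).2
        have h2 : psiVal f (xT (σ k)) ≤ f (xT (σ k), y) := ciInf_le hbdd y
        simp only [psiVal] at h1 h2
        linarith
      have hA : Tendsto (fun k => f (xT (σ k), yT (σ k) (xT (σ k)))) atTop
          (𝓝 (f (xbar, ybar))) := (hf.continuousAt.tendsto.comp hpair)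
      have hB : Tendsto (fun k => f (xT (σ k), y) + ε) atTop (𝓝 (f (xbar, y) + ε)) := by
        have : Tendsto (fun k => f (xT (σ k), y)) atTop (𝓝 (f (xbar, y))) :=
          hf.continuousAt.tendsto.comp (hx_tendsto.prodMk_nhds tendsto_const_nhds)
        exact this.add tendsto_const_nhds
      exact le_of_tendsto_of_tendsto hA hB hev
    exact le_ciInf key
  -- phiVal F f xbar ≤ F (xbar, ybar)
  have hKy : ybar ∈ K := (hSol xbar hxbarX).2 hyLL
  have hKne : K.Nonempty := ⟨ybar, hKy⟩
  obtain ⟨z₀, hz₀K, hz₀⟩ := hKcp.exists_isMinOn hKne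
    ((hF.comp (Continuous.prodMk_right xbar)).continuousOn :
      ContinuousOn (fun y => F (xbar, y)) K)
  have hphibdd : BddBelow (Set.range fun y : LLsol f xbar => F (xbar, (y : EuclideanSpace ℝ (Fin n)))) := by
    refine ⟨F (xbar, z₀), ?_⟩
    rintro _ ⟨⟨y, hy⟩, rfl⟩
    exact hz₀ ((hSol xbar hxbarX).2 hy)
  have h4 : phiVal F f xbar ≤ F (xbar, ybar) := by
    have : Nonempty (LLsol f xbar) := ⟨⟨ybar, hyLL⟩⟩
    exact ciInf_le hphibdd (⟨ybar, hyLL⟩ : LLsol f xbar)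
  -- F (xbar, ybar) ≤ phiVal F f x
  have h5 : F (xbar, ybar) ≤ phiVal F f x := by
    have hA : Tendsto (fun k => F (xT (σ k), yT (σ k) (xT (σ k)))) atTop
        (𝓝 (F (xbar, ybar))) := hF.continuousAt.tendsto.comp hpair
    have hB : Tendsto (fun k => F (x, yT (σ k) x)) atTop (𝓝 (phiVal F f x)) := by
      have hbase : Tendsto (fun T => F (x, yT T x)) atTop (𝓝 (phiVal F f x)) :=
        tendsto_phiT_aux F f hF hf K hKcp x (hSol x hx).1 (hSol x hx).2
          (fun T => yT T x) C (fun T => hC T x hx) (hP2 x hx)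
      exact hbase.comp hσmono.tendsto_atTop
    exact le_of_tendsto_of_tendsto' hA hB (fun k => (hxT (σ k)).2 x hx)
  linarith
end

section
/- Suppose X ⊆ ℝ^m is nonempty and compact, F, f : ℝ^m × ℝ^n → ℝ are continuous, and there is a compact set K ⊆ ℝ^n such that for every x ∈ X the set S̃(x) is nonempty and S(x) ⊆ K. Assume the family of maps y_T : X → ℝ^n satisfies properties (P1) and (P2), and that for each T a global minimizer of φ_T over X exists. Then inf_{x ∈ X} φ_T(x) → inf_{x ∈ X} φ(x) as T → ∞. -/
open Filter Topology

/-- Convergence of optimal values: `inf_{x ∈ X} φ_T(x) → inf_{x ∈ X} φ(x)` as `T → ∞`. -/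
theorem statement1 {m n : ℕ}
    (X : Set (EuclideanSpace ℝ (Fin m))) (hXne : X.Nonempty) (hXcp : IsCompact X)
    (F f : EuclideanSpace ℝ (Fin m) × EuclideanSpace ℝ (Fin n) → ℝ)
    (hF : Continuous F) (hf : Continuous f)
    (K : Set (EuclideanSpace ℝ (Fin n))) (hKcp : IsCompact K)
    (hSol : ∀ x ∈ X, (ISBsol F f x).Nonempty ∧ LLsol f x ⊆ K)
    (yT : ℕ → EuclideanSpace ℝ (Fin m) → EuclideanSpace ℝ (Fin n))
    -- (P1): uniform boundedness of the family {y_T} on X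
    (hP1bdd : ∃ C : ℝ, ∀ T : ℕ, ∀ x ∈ X, ‖yT T x‖ ≤ C)
    -- (P1): sup_{x ∈ X} (f(x, y_T(x)) − ψ(x)) → 0 as T → ∞
    (hP1 : ∀ ε > (0 : ℝ), ∃ N : ℕ, ∀ T ≥ N, ∀ x ∈ X, f (x, yT T x) - psiVal f x ≤ ε)
    -- (P2): pointwise dist(y_T(x), S̃(x)) → 0
    (hP2 : ∀ x ∈ X,
      Tendsto (fun T => Metric.infDist (yT T x) (ISBsol F f x)) atTop (𝓝 0))
    -- for each T, a global minimizer of φ_T(x) := F(x, y_T(x)) over X exists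
    (hmin : ∀ T : ℕ, ∃ xm ∈ X, ∀ x ∈ X, F (xm, yT T xm) ≤ F (x, yT T x)) :
    Tendsto (fun T => ⨅ x : X, F ((x : EuclideanSpace ℝ (Fin m)), yT T x))
      atTop (𝓝 (⨅ x : X, phiVal F f x)) := by
  classical
  haveI : Nonempty X := hXne.to_subtype
  obtain ⟨C, hC⟩ := hP1bdd
  obtain ⟨x₀', hx₀'⟩ := hXne
  have hKne : K.Nonempty := by
    obtain ⟨⟨y, hy⟩, hsub⟩ := hSol x₀' hx₀'
    exact ⟨y, hsub hy.1⟩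
  set B : Set (EuclideanSpace ℝ (Fin n)) :=
    Metric.closedBall (0 : EuclideanSpace ℝ (Fin n)) C ∪ K with hBdef
  have hBcp : IsCompact B := (isCompact_closedBall _ _).union hKcp
  have hKB : K ⊆ B := Set.subset_union_right
  have hyTB : ∀ T : ℕ, ∀ x ∈ X, yT T x ∈ B := fun T x hx =>
    Or.inl (mem_closedBall_zero_iff.2 (hC T x hx))
  have hBne : B.Nonempty := hKne.mono hKB
  -- continuity of slices
  have hslice : ∀ x : EuclideanSpace ℝ (Fin m), Continuous fun y => f (x, y) :=
    fun x => hf.comp (continuous_const.prodMk continuous_id)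
  have hsliceF : ∀ x : EuclideanSpace ℝ (Fin m), Continuous fun y => F (x, y) :=
    fun x => hF.comp (continuous_const.prodMk continuous_id)
  -- f(x,·) is bounded below for x ∈ X
  have hbddf : ∀ x ∈ X, BddBelow (Set.range fun y => f (x, y)) := by
    intro x hx
    by_contra hnb
    have hpsi : psiVal f x = 0 := Real.iInf_of_not_bddBelow hnb
    obtain ⟨y₀, hy₀K, hy₀min⟩ := hKcp.exists_isMinOn hKne (hslice x).continuousOn
    obtain ⟨v, ⟨y, rfl⟩, hvlt⟩ := not_bddBelow_iff.1 hnb (min (f (x, y₀)) 0)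
    have hyK : y ∈ K := (hSol x hx).2 (by
      simp only [LLsol, Set.mem_setOf_eq, hpsi]
      exact le_of_lt (lt_of_lt_of_le hvlt (min_le_right _ _)))
    have : f (x, y₀) ≤ f (x, y) := hy₀min hyK
    have : f (x, y) < f (x, y₀) := lt_of_lt_of_le hvlt (min_le_left _ _)
    linarith
  have hpsile : ∀ x ∈ X, ∀ y, psiVal f x ≤ f (x, y) := fun x hx y =>
    ciInf_le (hbddf x hx) y
  -- global lower bound for F on X × B
  obtain ⟨P, hPmem, hPmin⟩ := (hXcp.prod hBcp).exists_isMinOn (Set.Nonempty.prod ⟨x₀', hx₀'⟩ hBne)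
    hF.continuousOn
  set BF : ℝ := F P with hBFdef
  have hFlb : ∀ x ∈ X, ∀ y ∈ B, BF ≤ F (x, y) := fun x hx y hy =>
    hPmin (Set.mk_mem_prod hx hy)
  -- phiVal lower bounds
  have hphile : ∀ x ∈ X, ∀ y ∈ LLsol f x, phiVal F f x ≤ F (x, y) := by
    intro x hx y hy
    have hbdd : BddBelow (Set.range fun y : LLsol f x => F (x, (y : EuclideanSpace ℝ (Fin n)))) := by
      refine ⟨BF, ?_⟩
      rintro v ⟨⟨z, hz⟩, rfl⟩
      exact hFlb x hx z (hKB ((hSol x hx).2 hz))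
    exact ciInf_le hbdd ⟨y, hy⟩
  have hphival : ∀ x ∈ X, BF ≤ phiVal F f x := by
    intro x hx
    obtain ⟨y, hyLL, hyeq⟩ := (hSol x hx).1
    rw [← hyeq]
    exact hFlb x hx y (hKB ((hSol x hx).2 hyLL))
  have hLbdd : BddBelow (Set.range fun x : X => phiVal F f x) := by
    refine ⟨BF, ?_⟩
    rintro v ⟨⟨x, hx⟩, rfl⟩
    exact hphival x hx
  have hTbdd : ∀ T : ℕ, BddBelow (Set.range fun x : X =>
      F ((x : EuclideanSpace ℝ (Fin m)), yT T x)) := by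
    intro T
    refine ⟨BF, ?_⟩
    rintro v ⟨⟨x, hx⟩, rfl⟩
    exact hFlb x hx _ (hyTB T x hx)
  set L : ℝ := ⨅ x : X, phiVal F f x with hLdef
  rw [Metric.tendsto_atTop]
  intro ε hε
  -- UPPER bound : eventually inf_T < L + ε
  have hupper : ∀ᶠ T in atTop, (⨅ x : X, F ((x : EuclideanSpace ℝ (Fin m)), yT T x)) < L + ε := by
    have hLlt : L < L + ε / 2 := by linarith
    obtain ⟨x₀, hx₀lt⟩ := exists_lt_of_ciInf_lt hLlt
    have hx₀X : (x₀ : EuclideanSpace ℝ (Fin m)) ∈ X := x₀.2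
    -- the set S̃(x₀) is compact and nonempty
    have hScl : IsClosed (ISBsol F f (x₀ : EuclideanSpace ℝ (Fin m))) := by
      have h1 : IsClosed (LLsol f (x₀ : EuclideanSpace ℝ (Fin m))) :=
        isClosed_le (hslice _) continuous_const
      have h2 : IsClosed {y : EuclideanSpace ℝ (Fin n) |
          F ((x₀ : EuclideanSpace ℝ (Fin m)), y) = phiVal F f x₀} :=
        isClosed_eq (hsliceF _) continuous_const
      exact h1.inter h2
    have hSsub : ISBsol F f (x₀ : EuclideanSpace ℝ (Fin m)) ⊆ K := fun y hy =>
      (hSol _ hx₀X).2 hy.1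
    have hScp : IsCompact (ISBsol F f (x₀ : EuclideanSpace ℝ (Fin m))) :=
      hKcp.of_isClosed_subset hScl hSsub
    have hSne : (ISBsol F f (x₀ : EuclideanSpace ℝ (Fin m))).Nonempty := (hSol _ hx₀X).1
    -- uniform continuity of F(x₀, ·) on B
    have hUC : UniformContinuousOn (fun y => F ((x₀ : EuclideanSpace ℝ (Fin m)), y)) B :=
      hBcp.uniformContinuousOn_of_continuous (hsliceF _).continuousOn
    rw [Metric.uniformContinuousOn_iff] at hUC
    obtain ⟨δ, hδpos, hδ⟩ := hUC (ε / 2) (by linarith)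
    have hev : ∀ᶠ T in atTop,
        Metric.infDist (yT T x₀) (ISBsol F f (x₀ : EuclideanSpace ℝ (Fin m))) < δ :=
      (hP2 x₀ hx₀X).eventually_lt_const hδpos
    filter_upwards [hev] with T hT
    obtain ⟨z, hzS, hzeq⟩ := hScp.exists_infDist_eq_dist hSne (yT T x₀)
    have hdist : dist (yT T x₀) z < δ := by rw [← hzeq]; exact hT
    have hyB : yT T x₀ ∈ B := hyTB T x₀ hx₀X
    have hzB : z ∈ B := hKB (hSsub hzS)
    have hFd : dist (F ((x₀ : EuclideanSpace ℝ (Fin m)), yT T x₀))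
        (F ((x₀ : EuclideanSpace ℝ (Fin m)), z)) < ε / 2 := hδ _ hyB _ hzB hdist
    have hFz : F ((x₀ : EuclideanSpace ℝ (Fin m)), z) = phiVal F f x₀ := hzS.2
    have h1 : F ((x₀ : EuclideanSpace ℝ (Fin m)), yT T x₀) < phiVal F f x₀ + ε / 2 := by
      have := abs_sub_lt_iff.1 (by rwa [Real.dist_eq] at hFd)
      linarith [this.1, hFz ▸ this.1]
    calc (⨅ x : X, F ((x : EuclideanSpace ℝ (Fin m)), yT T x))
        ≤ F ((x₀ : EuclideanSpace ℝ (Fin m)), yT T x₀) := ciInf_le (hTbdd T) x₀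
      _ < phiVal F f x₀ + ε / 2 := h1
      _ < L + ε := by linarith
  -- LOWER bound : eventually L - ε < inf_T
  have hlower : ∀ᶠ T in atTop,
      L - ε < (⨅ x : X, F ((x : EuclideanSpace ℝ (Fin m)), yT T x)) := by
    by_contra hcon
    rw [Filter.not_eventually] at hcon
    have hcon' : ∃ᶠ T in atTop,
        (⨅ x : X, F ((x : EuclideanSpace ℝ (Fin m)), yT T x)) ≤ L - ε := by
      refine hcon.mono fun T hT => ?_
      push_neg at hT; exact hT
    obtain ⟨u, humono, hu⟩ := Filter.extraction_of_frequently_atTop hcon'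
    have hx : ∀ k : ℕ, ∃ x : X,
        F ((x : EuclideanSpace ℝ (Fin m)), yT (u k) x) < L - ε / 2 := by
      intro k
      exact exists_lt_of_ciInf_lt (lt_of_le_of_lt (hu k) (by linarith))
    choose xs hxs using hx
    obtain ⟨xb, hxbX, φ₁, hφ₁, hxconv⟩ :=
      hXcp.tendsto_subseq (fun k => (xs k).2)
    have hymem : ∀ k : ℕ, yT (u (φ₁ k)) (xs (φ₁ k)) ∈
        Metric.closedBall (0 : EuclideanSpace ℝ (Fin n)) C := fun k =>
      mem_closedBall_zero_iff.2 (hC _ _ (xs (φ₁ k)).2)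
    obtain ⟨yb, _, φ₂, hφ₂, hyconv⟩ :=
      (isCompact_closedBall (0 : EuclideanSpace ℝ (Fin n)) C).tendsto_subseq hymem
    set idx : ℕ → ℕ := fun k => φ₁ (φ₂ k) with hidxdef
    set a : ℕ → EuclideanSpace ℝ (Fin m) := fun k => (xs (idx k) : EuclideanSpace ℝ (Fin m))
      with hadef
    set b : ℕ → EuclideanSpace ℝ (Fin n) := fun k => yT (u (idx k)) (xs (idx k)) with hbdef
    have ha : Tendsto a atTop (𝓝 xb) := hxconv.comp hφ₂.tendsto_atTop
    have hb : Tendsto b atTop (𝓝 yb) := hyconv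
    have haX : ∀ k, a k ∈ X := fun k => (xs (idx k)).2
    have hTk : ∀ k : ℕ, k ≤ u (idx k) := fun k =>
      ((humono.comp (hφ₁.comp hφ₂)).le_apply)
    have hab : Tendsto (fun k => (a k, b k)) atTop (𝓝 (xb, yb)) := ha.prodMk_nhds hb
    have hfab : Tendsto (fun k => f (a k, b k)) atTop (𝓝 (f (xb, yb))) :=
      (hf.tendsto _).comp hab
    have hFab : Tendsto (fun k => F (a k, b k)) atTop (𝓝 (F (xb, yb))) :=
      (hF.tendsto _).comp hab
    -- yb ∈ LLsol f xb
    have hyLL : yb ∈ LLsol f xb := by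
      have hkey : ∀ y : EuclideanSpace ℝ (Fin n), f (xb, yb) ≤ f (xb, y) := by
        intro y
        have hfy : Tendsto (fun k => f (a k, y)) atTop (𝓝 (f (xb, y))) :=
          (hf.tendsto _).comp (ha.prodMk_nhds tendsto_const_nhds)
        refine le_of_forall_pos_le_add fun ε' hε' => ?_
        obtain ⟨N, hN⟩ := hP1 ε' hε'
        refine le_of_tendsto_of_tendsto hfab (hfy.add tendsto_const_nhds)
          (eventually_atTop.2 ⟨N, fun k hk => ?_⟩)
        have h1 : f (a k, b k) - psiVal f (a k) ≤ ε' :=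
          hN (u (idx k)) (le_trans hk (hTk k)) (a k) (haX k)
        have h2 : psiVal f (a k) ≤ f (a k, y) := hpsile (a k) (haX k) y
        simp only [Pi.add_apply]
        linarith
      exact le_ciInf hkey
    -- contradiction
    have h3 : L ≤ phiVal F f xb := ciInf_le hLbdd ⟨xb, hxbX⟩
    have h4 : phiVal F f xb ≤ F (xb, yb) := hphile xb hxbX yb hyLL
    have h5 : F (xb, yb) ≤ L - ε / 2 :=
      le_of_tendsto hFab (Eventually.of_forall fun k => le_of_lt (hxs (idx k)))
    linarith
  obtain ⟨N₁, hN₁⟩ := eventually_atTop.1 hupper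
  obtain ⟨N₂, hN₂⟩ := eventually_atTop.1 hlower
  refine ⟨max N₁ N₂, fun T hT => ?_⟩
  have h1 := hN₁ T (le_trans (le_max_left _ _) hT)
  have h2 := hN₂ T (le_trans (le_max_right _ _) hT)
  rw [Real.dist_eq, abs_sub_lt_iff]
  constructor <;> linarith
end

section
/- Suppose X ⊆ ℝ^m is nonempty and compact, F, f : ℝ^m × ℝ^n → ℝ are continuous, and there is a compact set K ⊆ ℝ^n such that for every x ∈ X the set S̃(x) is nonempty and S(x) ⊆ K. Assume the family of maps y_T : X → ℝ^n satisfies properties (P1) and (P2). If there exists δ > 0, independent of T, such that each x_T ∈ X is a δ-local minimizer of φ_T on X (i.e., φ_T(x_T) ≤ φ_T(x) for all x ∈ X with ‖x − x_T‖ ≤ δ), then every limit point x̄ of {x_T} is a local minimizer of φ on X: there exists δ̃ > 0 such that φ(x̄) ≤ φ(x) for all x ∈ X with ‖x − x̄‖ ≤ δ̃. -/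
open Filter Topology

section Aux

variable {m n : ℕ}
  {F f : EuclideanSpace ℝ (Fin m) × EuclideanSpace ℝ (Fin n) → ℝ}
  {K : Set (EuclideanSpace ℝ (Fin n))} {x : EuclideanSpace ℝ (Fin m)}

lemma aux_lower_bound_on_K (hF : Continuous F) (hKcp : IsCompact K) :
    ∃ B : ℝ, ∀ y ∈ K, B ≤ F (x, y) := by
  have hcont : Continuous fun y : EuclideanSpace ℝ (Fin n) => F (x, y) :=
    hF.comp (continuous_const.prodMk continuous_id)
  obtain ⟨B, hB⟩ := (hKcp.image hcont).bddBelow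
  exact ⟨B, fun y hy => hB (Set.mem_image_of_mem _ hy)⟩

lemma aux_bddBelow_f (hf : Continuous f) (hKcp : IsCompact K)
    (hne : (LLsol f x).Nonempty) (hsub : LLsol f x ⊆ K) :
    BddBelow (Set.range fun y => f (x, y)) := by
  by_contra h
  have hpsi : psiVal f x = 0 := Real.iInf_of_not_bddBelow h
  obtain ⟨B, hB⟩ := aux_lower_bound_on_K (F := f) (x := x) hf hKcp
  obtain ⟨z, hzmem, hz⟩ := not_bddBelow_iff.1 h (min B 0)
  obtain ⟨y, rfl⟩ := hzmem
  have hyLL : y ∈ LLsol f x := by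
    have : f (x, y) ≤ psiVal f x := by rw [hpsi]; exact hz.le.trans (min_le_right _ _)
    exact this
  have := hB y (hsub hyLL)
  have := hz.trans_le (min_le_left B 0)
  linarith

lemma aux_bddBelow_F (hF : Continuous F) (hKcp : IsCompact K)
    (hsub : LLsol f x ⊆ K) :
    BddBelow (Set.range fun y : LLsol f x => F (x, (y : EuclideanSpace ℝ (Fin n)))) := by
  obtain ⟨B, hB⟩ := aux_lower_bound_on_K (F := F) (x := x) hF hKcp
  refine ⟨B, ?_⟩
  rintro v ⟨⟨y, hy⟩, rfl⟩
  exact hB y (hsub hy)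

lemma aux_phi_le (hF : Continuous F) (hKcp : IsCompact K)
    (hsub : LLsol f x ⊆ K) {y : EuclideanSpace ℝ (Fin n)} (hy : y ∈ LLsol f x) :
    phiVal F f x ≤ F (x, y) :=
  ciInf_le (aux_bddBelow_F hF hKcp hsub) ⟨y, hy⟩

lemma aux_ISB_closed (hF : Continuous F) (hf : Continuous f) :
    IsClosed (ISBsol F f x) := by
  have h1 : IsClosed (LLsol f x) :=
    isClosed_le (hf.comp (continuous_const.prodMk continuous_id)) continuous_const
  have h2 : IsClosed {y : EuclideanSpace ℝ (Fin n) | F (x, y) = phiVal F f x} :=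
    isClosed_eq (hF.comp (continuous_const.prodMk continuous_id)) continuous_const
  exact h1.inter h2

lemma aux_eventually_le (hF : Continuous F) (hf : Continuous f) (hKcp : IsCompact K)
    (hne : (ISBsol F f x).Nonempty) (hsub : LLsol f x ⊆ K)
    {yT : ℕ → EuclideanSpace ℝ (Fin m) → EuclideanSpace ℝ (Fin n)}
    {C : ℝ} (hyC : ∀ T, ‖yT T x‖ ≤ C)
    (hP2 : Tendsto (fun T => Metric.infDist (yT T x) (ISBsol F f x)) atTop (𝓝 0))
    {ε : ℝ} (hε : 0 < ε) :
    ∀ᶠ T in atTop, F (x, yT T x) ≤ phiVal F f x + ε := by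
  have hsub' : ISBsol F f x ⊆ K := fun y hy => hsub hy.1
  have hScp : IsCompact (ISBsol F f x) :=
    hKcp.of_isClosed_subset (aux_ISB_closed hF hf) hsub'
  set M : Set (EuclideanSpace ℝ (Fin n)) := Metric.closedBall 0 C ∪ K with hM
  have hMcp : IsCompact M := (isCompact_closedBall 0 C).union hKcp
  have hg : Continuous fun y : EuclideanSpace ℝ (Fin n) => F (x, y) :=
    hF.comp (continuous_const.prodMk continuous_id)
  have hUC := hMcp.uniformContinuousOn_of_continuous hg.continuousOn
  obtain ⟨η, hη, hd⟩ := Metric.uniformContinuousOn_iff.1 hUC ε hε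
  have hev : ∀ᶠ T in atTop, Metric.infDist (yT T x) (ISBsol F f x) < η :=
    hP2.eventually_lt_const hη
  filter_upwards [hev] with T hT
  obtain ⟨z, hzmem, hzd⟩ := hScp.exists_infDist_eq_dist hne (yT T x)
  have hyM : yT T x ∈ M := Or.inl (mem_closedBall_zero_iff.2 (hyC T))
  have hzM : z ∈ M := Or.inr (hsub' hzmem)
  have hlt : dist (yT T x) z < η := by rw [← hzd]; exact hT
  have := hd _ hyM _ hzM hlt
  rw [Real.dist_eq] at this
  have habs := abs_lt.1 this
  have hez : F (x, z) = phiVal F f x := hzmem.2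
  linarith [habs.2]

end Aux

/-- Convergence towards a local minimum: if each `x_T` is a `δ`-local minimizer of
`φ_T` on `X` (with `δ` independent of `T`), then every limit point of `{x_T}` is a
local minimizer of `φ` on `X`. -/
theorem statement2 {m n : ℕ}
    (X : Set (EuclideanSpace ℝ (Fin m))) (hXne : X.Nonempty) (hXcp : IsCompact X)
    (F f : EuclideanSpace ℝ (Fin m) × EuclideanSpace ℝ (Fin n) → ℝ)
    (hF : Continuous F) (hf : Continuous f)
    (K : Set (EuclideanSpace ℝ (Fin n))) (hKcp : IsCompact K)
    (hSol : ∀ x ∈ X, (ISBsol F f x).Nonempty ∧ LLsol f x ⊆ K)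
    (yT : ℕ → EuclideanSpace ℝ (Fin m) → EuclideanSpace ℝ (Fin n))
    -- (P1): uniform boundedness of the family {y_T} on X
    (hP1bdd : ∃ C : ℝ, ∀ T : ℕ, ∀ x ∈ X, ‖yT T x‖ ≤ C)
    -- (P1): sup_{x ∈ X} (f(x, y_T(x)) − ψ(x)) → 0 as T → ∞
    (hP1 : ∀ ε > (0 : ℝ), ∃ N : ℕ, ∀ T ≥ N, ∀ x ∈ X, f (x, yT T x) - psiVal f x ≤ ε)
    -- (P2): pointwise dist(y_T(x), S̃(x)) → 0
    (hP2 : ∀ x ∈ X,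
      Tendsto (fun T => Metric.infDist (yT T x) (ISBsol F f x)) atTop (𝓝 0))
    (xT : ℕ → EuclideanSpace ℝ (Fin m))
    (δ : ℝ) (hδ : 0 < δ)
    -- each x_T ∈ X is a δ-local minimizer of φ_T(x) := F(x, y_T(x)) on X
    (hxT : ∀ T : ℕ, xT T ∈ X ∧
      ∀ x ∈ X, ‖x - xT T‖ ≤ δ → F (xT T, yT T (xT T)) ≤ F (x, yT T x))
    (xbar : EuclideanSpace ℝ (Fin m))
    (hxbar : MapClusterPt xbar atTop xT) :
    xbar ∈ X ∧ ∃ δ' > (0 : ℝ), ∀ x ∈ X, ‖x - xbar‖ ≤ δ' →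
      phiVal F f xbar ≤ phiVal F f x := by
  obtain ⟨C, hC⟩ := hP1bdd
  have hxTX : ∀ T, xT T ∈ X := fun T => (hxT T).1
  obtain ⟨θ, hθ, hθt⟩ := TopologicalSpace.FirstCountableTopology.tendsto_subseq hxbar
  have hxX : xbar ∈ X :=
    hXcp.isClosed.mem_of_tendsto hθt (Eventually.of_forall fun k => hxTX _)
  -- further subsequence along which y_T(x_T) converges
  obtain ⟨ybar, _, σ, hσ, hσt⟩ :=
    (isCompact_closedBall (0 : EuclideanSpace ℝ (Fin n)) C).tendsto_subseq
      (x := fun k => yT (θ k) (xT (θ k)))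
      (fun k => mem_closedBall_zero_iff.2 (hC (θ k) _ (hxTX _)))
  set ι : ℕ → ℕ := θ ∘ σ with hιdef
  have hι : StrictMono ι := hθ.comp hσ
  have hxι : Tendsto (fun k => xT (ι k)) atTop (𝓝 xbar) := hθt.comp hσ.tendsto_atTop
  have hyι : Tendsto (fun k => yT (ι k) (xT (ι k))) atTop (𝓝 ybar) := hσt
  have hpair : Tendsto (fun k => (xT (ι k), yT (ι k) (xT (ι k)))) atTop (𝓝 (xbar, ybar)) :=
    hxι.prodMk_nhds hyι
  have hFt : Tendsto (fun k => F (xT (ι k), yT (ι k) (xT (ι k)))) atTop (𝓝 (F (xbar, ybar))) :=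
    (hF.tendsto _).comp hpair
  -- ybar ∈ LLsol f xbar
  have hyLL : ybar ∈ LLsol f xbar := by
    have key : ∀ y' : EuclideanSpace ℝ (Fin n), f (xbar, ybar) ≤ f (xbar, y') := by
      intro y'
      refine le_of_forall_pos_le_add fun e he => ?_
      obtain ⟨N, hN⟩ := hP1 e he
      have hft : Tendsto (fun k => f (xT (ι k), yT (ι k) (xT (ι k)))) atTop
          (𝓝 (f (xbar, ybar))) := (hf.tendsto _).comp hpair
      have hgt : Tendsto (fun k => f (xT (ι k), y') + e) atTop (𝓝 (f (xbar, y') + e)) :=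
        (((hf.tendsto _).comp (hxι.prodMk_nhds tendsto_const_nhds))).add_const e
      refine le_of_tendsto_of_tendsto hft hgt ?_
      filter_upwards [hι.tendsto_atTop.eventually_ge_atTop N] with k hk
      have h1 := hN (ι k) hk (xT (ι k)) (hxTX _)
      have h2 : psiVal f (xT (ι k)) ≤ f (xT (ι k), y') := by
        have hSolk := hSol (xT (ι k)) (hxTX _)
        have hneLL : (LLsol f (xT (ι k))).Nonempty := by
          obtain ⟨y0, hy0⟩ := hSolk.1
          exact ⟨y0, hy0.1⟩
        exact ciInf_le (aux_bddBelow_f hf hKcp hneLL hSolk.2) y'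
      linarith
    exact le_ciInf key
  have hphibar : phiVal F f xbar ≤ F (xbar, ybar) :=
    aux_phi_le hF hKcp (hSol xbar hxX).2 hyLL
  refine ⟨hxX, δ / 2, half_pos hδ, fun x hxmem hxd => ?_⟩
  refine hphibar.trans (le_of_forall_pos_le_add fun ε hε => ?_)
  have hev1 : ∀ᶠ T in atTop, F (x, yT T x) ≤ phiVal F f x + ε :=
    aux_eventually_le hF hf hKcp (hSol x hxmem).1 (hSol x hxmem).2
      (fun T => hC T x hxmem) (hP2 x hxmem) hε
  have hev2 : ∀ᶠ k in atTop, F (x, yT (ι k) x) ≤ phiVal F f x + ε :=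
    hι.tendsto_atTop.eventually hev1
  have hev3 : ∀ᶠ k in atTop, dist (xT (ι k)) xbar < δ / 2 :=
    hxι.eventually (Metric.ball_mem_nhds xbar (half_pos hδ))
  refine le_of_tendsto hFt ?_
  filter_upwards [hev2, hev3] with k h2 h3
  have hnorm : ‖x - xT (ι k)‖ ≤ δ := by
    have h4 : dist x (xT (ι k)) ≤ dist x xbar + dist xbar (xT (ι k)) := dist_triangle _ _ _
    have h5 : dist x xbar ≤ δ / 2 := by rwa [dist_eq_norm]
    rw [dist_comm] at h3
    rw [← dist_eq_norm]
    linarith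
  exact ((hxT (ι k)).2 x hxmem hnorm).trans h2
end

section
/- Let T ≥ 1, let A_1, …, A_T be n×n real matrices and B_0, B_1, …, B_T be n×m real matrices, and let λ_T ∈ ℝ^n and g_T ∈ ℝ^m be given. Define the backward recursions λ_{t−1} = A_tᵀ λ_t and g_{t−1} = g_t + B_tᵀ λ_t for t = T, T−1, …, 1, and finally g_{−1} = g_0 + B_0ᵀ λ_0. Then g_{−1} = g_T + Z_Tᵀ λ_T, where Z_T = Σ_{t=0}^{T} (A_T A_{T−1} ⋯ A_{t+1}) B_t with the empty product equal to the identity. That is, reverse-mode automatic differentiation computes the same hyper-gradient as the forward-mode closed form. -/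
open Filter Topology Matrix

lemma sum_mulVec' {α n m : Type*} [Fintype n] (s : Finset α)
    (f : α → Matrix m n ℝ) (v : n → ℝ) :
    (∑ i ∈ s, f i) *ᵥ v = ∑ i ∈ s, f i *ᵥ v := by
  induction s using Finset.cons_induction with
  | empty => simp
  | cons a s ha ih => simp [Finset.sum_cons, Matrix.add_mulVec, ih]

/-- Reverse-mode automatic differentiation computes the same hyper-gradient as the
forward-mode closed form: with the backward recursions `λ_{t−1} = A_tᵀ λ_t`,
`g_{t−1} = g_t + B_tᵀ λ_t` (for `t = T, …, 1`), the final output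
`g_{−1} = g_0 + B_0ᵀ λ_0` equals `g_T + Z_Tᵀ λ_T`, where
`Z_T = Σ_{t=0}^{T} (A_T ⋯ A_{t+1}) B_t` (empty product = identity). -/
theorem statement8 {n m T : ℕ} (hT : 1 ≤ T)
    (A : ℕ → Matrix (Fin n) (Fin n) ℝ)
    (B : ℕ → Matrix (Fin n) (Fin m) ℝ)
    (lam : ℕ → Fin n → ℝ) (g : ℕ → Fin m → ℝ)
    (hlam : ∀ t : ℕ, 1 ≤ t → t ≤ T → lam (t - 1) = (A t)ᵀ *ᵥ lam t)
    (hg : ∀ t : ℕ, 1 ≤ t → t ≤ T → g (t - 1) = g t + (B t)ᵀ *ᵥ lam t) :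
    g 0 + (B 0)ᵀ *ᵥ lam 0 =
      g T + (∑ t ∈ Finset.range (T + 1),
        (((List.range' (t + 1) (T - t)).reverse.map A).prod) * B t)ᵀ *ᵥ lam T := by
  have key : ∀ k, k ≤ T →
      (lam (T - k) = (((List.range' (T - k + 1) k).reverse.map A).prod)ᵀ *ᵥ lam T ∧
       g (T - k) = g T + ∑ t ∈ Finset.Ico (T - k + 1) (T + 1), (B t)ᵀ *ᵥ lam t) := by
    intro k
    induction k with
    | zero => intro _; simp [Matrix.one_mulVec]
    | succ k ih =>
      intro hk
      obtain ⟨hl, hgk⟩ := ih (Nat.le_of_succ_le hk)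
      have h1 : 1 ≤ T - k := by omega
      have h2 : T - k ≤ T := by omega
      have hTk : T - (k + 1) = T - k - 1 := by omega
      have hTk1 : T - k - 1 + 1 = T - k := by omega
      have hprod : ((List.range' (T - k) (k + 1)).reverse.map A).prod
          = ((List.range' (T - k + 1) k).reverse.map A).prod * A (T - k) := by
        rw [List.range'_succ, List.reverse_cons, List.map_append, List.prod_append]
        simp
      constructor
      · rw [hTk, hlam (T - k) h1 h2, hl, hTk1, hprod, Matrix.transpose_mul,
          Matrix.mulVec_mulVec]
      · rw [hTk, hg (T - k) h1 h2, hgk, hTk1]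
        have hlt : T - k < T + 1 := by omega
        rw [Finset.sum_eq_sum_Ico_succ_bot hlt]
        abel
  have lamEq : ∀ t, t ≤ T →
      lam t = (((List.range' (t + 1) (T - t)).reverse.map A).prod)ᵀ *ᵥ lam T := by
    intro t ht
    have := (key (T - t) (by omega)).1
    have e1 : T - (T - t) = t := by omega
    rw [e1] at this
    exact this
  have g0 : g 0 = g T + ∑ t ∈ Finset.Ico 1 (T + 1), (B t)ᵀ *ᵥ lam t := by
    have := (key T le_rfl).2
    simpa using this
  have hterm : ∀ t, t ≤ T →
      ((((List.range' (t + 1) (T - t)).reverse.map A).prod) * B t)ᵀ *ᵥ lam T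
        = (B t)ᵀ *ᵥ lam t := by
    intro t ht
    rw [Matrix.transpose_mul, ← Matrix.mulVec_mulVec, ← lamEq t ht]
  rw [Matrix.transpose_sum, sum_mulVec']
  have : ∑ t ∈ Finset.range (T + 1),
      ((((List.range' (t + 1) (T - t)).reverse.map A).prod) * B t)ᵀ *ᵥ lam T
      = ∑ t ∈ Finset.range (T + 1), (B t)ᵀ *ᵥ lam t := by
    refine Finset.sum_congr rfl fun t htm => hterm t ?_
    simpa [Nat.lt_succ_iff] using htm
  rw [this, Finset.range_eq_Ico, Finset.sum_eq_sum_Ico_succ_bot (by omega : 0 < T + 1),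
    g0]
  abel
end

section
/- Let f : ℝ^m × ℝ^n → ℝ be twice continuously differentiable, let y* : ℝ^m → ℝ^n be differentiable at x₀ with ∇_y f(x, y*(x)) = 0 for all x in a neighborhood of x₀, let H (the partial Hessian ∂²f/∂y∂y' at (x₀, y*(x₀))) be invertible, and let C be the mixed second derivative ∂²f/∂y∂x' at (x₀, y*(x₀)). Let F : ℝ^m × ℝ^n → ℝ be differentiable and define φ(x) := F(x, y*(x)). Then the gradient of φ at x₀ satisfies ∇φ(x₀) = ∇_x F(x₀, y*(x₀)) − Cᵀ H⁻¹ ∇_y F(x₀, y*(x₀)), where Cᵀ denotes the adjoint (transpose) of the linear map C : ℝ^m → ℝ^n. -/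
/-!
Differentiating the optimality condition `∇_y f(x, y*(x)) = 0` along the graph of `y*` gives
`C + H ∘ Dy* = 0`, so `Dy* = -H⁻¹ C`. The chain rule gives `Dφ = D_x F + D_y F ∘ Dy*`, and
passing to gradients transposes `H⁻¹ C` into `Cᵀ H⁻¹`, because the Hessian `H` is symmetric
(Schwarz) and hence so is `H⁻¹`.
-/

open Filter Topology InnerProductSpace ContinuousLinearMap

section Partials

variable {𝕜 E F W : Type*} [NontriviallyNormedField 𝕜]
  [NormedAddCommGroup E] [NormedSpace 𝕜 E] [NormedAddCommGroup F] [NormedSpace 𝕜 F]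
  [NormedAddCommGroup W] [NormedSpace 𝕜 W]

theorem DifferentiableAt.hasFDerivAt_comp_graph {G : E × F → W} {y : E → F} {x₀ : E}
    (hG : DifferentiableAt 𝕜 G (x₀, y x₀)) (hy : DifferentiableAt 𝕜 y x₀) :
    HasFDerivAt (fun x => G (x, y x))
      (fderiv 𝕜 (fun x => G (x, y x₀)) x₀ +
        (fderiv 𝕜 (fun y' => G (x₀, y')) (y x₀)).comp (fderiv 𝕜 y x₀)) x₀ := by
  have hx : HasFDerivAt (fun x => G (x, y x₀)) ((fderiv 𝕜 G (x₀, y x₀)).comp (inl 𝕜 E F)) x₀ :=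
    hG.hasFDerivAt.comp x₀ (hasFDerivAt_prodMk_left x₀ (y x₀))
  have hy' : HasFDerivAt (fun y' => G (x₀, y')) ((fderiv 𝕜 G (x₀, y x₀)).comp (inr 𝕜 E F)) (y x₀) :=
    hG.hasFDerivAt.comp (y x₀) (hasFDerivAt_prodMk_right x₀ (y x₀))
  rw [hx.fderiv, hy'.fderiv]
  refine (hG.hasFDerivAt.comp x₀ ((hasFDerivAt_id x₀).prodMk hy.hasFDerivAt)).congr_fderiv ?_
  ext v
  simp [← map_add]

theorem fderiv_eq_neg_comp_of_eventually_eq_zero {G : E × F → W} {y : E → F} {x₀ : E}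
    (hG : DifferentiableAt 𝕜 G (x₀, y x₀)) (hy : DifferentiableAt 𝕜 y x₀)
    (hzero : ∀ᶠ x in 𝓝 x₀, G (x, y x) = 0) {L : W →L[𝕜] F}
    (hL : L.comp (fderiv 𝕜 (fun y' => G (x₀, y')) (y x₀)) = ContinuousLinearMap.id 𝕜 F) :
    fderiv 𝕜 y x₀ = -L.comp (fderiv 𝕜 (fun x => G (x, y x₀)) x₀) := by
  have hsum := (hG.hasFDerivAt_comp_graph hy).unique
    ((hasFDerivAt_const 0 x₀).congr_of_eventuallyEq hzero)
  calc fderiv 𝕜 y x₀ = L.comp ((fderiv 𝕜 (fun y' => G (x₀, y')) (y x₀)).comp (fderiv 𝕜 y x₀)) := by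
        rw [← comp_assoc, hL, id_comp]
    _ = -L.comp (fderiv 𝕜 (fun x => G (x, y x₀)) x₀) := by
        rw [eq_neg_of_add_eq_zero_right hsum, comp_neg]

end Partials

theorem toDual_symm_comp {𝕜 : Type*} [RCLike 𝕜] {E F : Type*} [NormedAddCommGroup E]
    [InnerProductSpace 𝕜 E] [CompleteSpace E] [NormedAddCommGroup F] [InnerProductSpace 𝕜 F]
    [CompleteSpace F] (L : StrongDual 𝕜 F) (A : E →L[𝕜] F) :
    (toDual 𝕜 E).symm (L.comp A) = adjoint A ((toDual 𝕜 F).symm L) := by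
  refine ext_inner_right 𝕜 fun x => ?_
  rw [toDual_symm_apply, adjoint_inner_left, toDual_symm_apply, comp_apply]

section Gradient

variable {E F : Type*} [NormedAddCommGroup E] [InnerProductSpace ℝ E]
  [NormedAddCommGroup F] [InnerProductSpace ℝ F] [CompleteSpace F]

theorem ContDiffAt.isSelfAdjoint_fderiv_gradient {φ : F → ℝ} {y₀ : F}
    (hφ : ContDiffAt ℝ 2 φ y₀) : IsSelfAdjoint (fderiv ℝ (gradient φ) y₀) := by
  have hgrad : gradient φ = (toDual ℝ F).symm ∘ fderiv ℝ φ := rfl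
  rw [isSelfAdjoint_iff_isSymmetric, hgrad, LinearIsometryEquiv.comp_fderiv]
  intro a b
  change ⟪(toDual ℝ F).symm _, b⟫_ℝ = ⟪a, (toDual ℝ F).symm _⟫_ℝ
  rw [toDual_symm_apply, real_inner_comm, toDual_symm_apply]
  exact hφ.isSymmSndFDerivAt (by simp) a b

noncomputable def partialGradient (f : E × F → ℝ) (p : E × F) : F :=
  gradient (fun y => f (p.1, y)) p.2

theorem ContDiff.differentiable_partialGradient {f : E × F → ℝ} (hf : ContDiff ℝ 2 f) :
    Differentiable ℝ (partialGradient f) := by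
  have hslice : partialGradient f = fun p => (toDual ℝ F).symm ((fderiv ℝ f p).comp (inr ℝ E F)) :=
    funext fun p => congrArg _ (((hf.differentiable (by norm_num) p).hasFDerivAt.comp p.2
      (hasFDerivAt_prodMk_right p.1 p.2)).fderiv)
  rw [hslice]
  have h1 : ContDiff ℝ 1 (fderiv ℝ f) := hf.fderiv_right (by norm_num)
  exact (toDual ℝ F).symm.differentiable.comp
    ((h1.differentiable one_ne_zero).clm_comp (differentiable_const _))

end Gradient

/-- Hyper-gradient formula via implicit differentiation: with `φ(x) := F(x, y*(x))`,
`∇φ(x₀) = ∇_x F(x₀, y*(x₀)) − Cᵀ H⁻¹ ∇_y F(x₀, y*(x₀))`, where `H` is the (invertible)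
partial Hessian of `f` in `y`, `C` the mixed second derivative `∂²f/∂y∂x'`, and `Cᵀ`
the adjoint of `C`. -/
theorem statement10 {m n : ℕ}
    (f : EuclideanSpace ℝ (Fin m) × EuclideanSpace ℝ (Fin n) → ℝ)
    (hf : ContDiff ℝ 2 f)
    (ystar : EuclideanSpace ℝ (Fin m) → EuclideanSpace ℝ (Fin n))
    (x₀ : EuclideanSpace ℝ (Fin m))
    (hdiff : DifferentiableAt ℝ ystar x₀)
    -- first-order optimality of y*(x) for the lower-level problem, near x₀
    (hcrit : ∀ᶠ x in 𝓝 x₀, gradient (fun y => f (x, y)) (ystar x) = 0)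
    -- H : partial Hessian ∂²f/∂y∂y' at (x₀, y*(x₀)), as a linear map ℝⁿ → ℝⁿ
    (H : EuclideanSpace ℝ (Fin n) →L[ℝ] EuclideanSpace ℝ (Fin n))
    (hH : H = fderiv ℝ (fun y => gradient (fun y' => f (x₀, y')) y) (ystar x₀))
    -- C : mixed second derivative ∂²f/∂y∂x' at (x₀, y*(x₀)), as a linear map ℝᵐ → ℝⁿ
    (C : EuclideanSpace ℝ (Fin m) →L[ℝ] EuclideanSpace ℝ (Fin n))
    (hC : C = fderiv ℝ (fun x => gradient (fun y => f (x, y)) (ystar x₀)) x₀)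
    -- H is invertible with inverse Hinv
    (Hinv : EuclideanSpace ℝ (Fin n) →L[ℝ] EuclideanSpace ℝ (Fin n))
    (hHinv₁ : Hinv.comp H = ContinuousLinearMap.id ℝ (EuclideanSpace ℝ (Fin n)))
    (hHinv₂ : H.comp Hinv = ContinuousLinearMap.id ℝ (EuclideanSpace ℝ (Fin n)))
    (F : EuclideanSpace ℝ (Fin m) × EuclideanSpace ℝ (Fin n) → ℝ)
    (hF : Differentiable ℝ F) :
    gradient (fun x => F (x, ystar x)) x₀ =
      gradient (fun x => F (x, ystar x₀)) x₀ -
        (ContinuousLinearMap.adjoint C)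
          (Hinv (gradient (fun y => F (x₀, y)) (ystar x₀))) := by
  have hHsa : IsSelfAdjoint H := by
    rw [hH]
    exact (hf.comp (contDiff_const.prodMk contDiff_id)).contDiffAt.isSelfAdjoint_fderiv_gradient
  let : Invertible H := ⟨Hinv, hHinv₁, hHinv₂⟩
  have hHinv : IsSelfAdjoint Hinv := (IsSelfAdjoint.invOf_iff H).2 hHsa
  have hDy : fderiv ℝ ystar x₀ = -Hinv.comp C := by
    rw [hC]
    exact fderiv_eq_neg_comp_of_eventually_eq_zero (G := partialGradient f)
      (hf.differentiable_partialGradient _) hdiff hcrit (hH ▸ hHinv₁)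
  rw [gradient, ((hF _).hasFDerivAt_comp_graph hdiff).fderiv, hDy, comp_neg, map_add, map_neg,
    toDual_symm_comp, adjoint_comp, hHinv.adjoint_eq, sub_eq_add_neg]
  rfl
end
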